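/- Let λ ⊢ n have Frobenius coordinates (a₁,...,a_m | b₁,...,b_m) with a₁ ≥ b₁, let k ≥ 2 be an integer, and set r = n − a₁ − 1/2. Then: (i) there exists an absolute constant c₀ > 0 such that if r ≤ c₀·n then ∑_{i=1}^m (a_i/n)^k + ∑_{i=1}^m (b_i/n)^k ≤ exp(−k·r/n + k·r²/n²); and (ii) for all r ≤ n, ∑_{i=1}^m (a_i/n)^k + ∑_{i=1}^m (b_i/n)^k ≤ exp(−k·r/(2n)). -/

import Mathlib

/-- The `i`-th part of a partition (0-indexed, parts in decreasing order, `0` beyond the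
number of parts). -/
def partNth (n : ℕ) (l : Nat.Partition n) (i : ℕ) : ℕ :=
  ((l.parts.sort (· ≤ ·)).reverse.getD i 0)

/-- Diagonal length `m` of the partition: the number of `i` (0-indexed) with `λ_{i+1} ≥ i+1`. -/
def diagLen (n : ℕ) (l : Nat.Partition n) : ℕ :=
  ((Finset.range n).filter (fun i => i < partNth n l i)).card

/-- Number of parts of the conjugate partition `λ'` at 0-indexed position `i`, i.e.
`λ'_{i+1} = #{j : λ_j ≥ i+1}`. -/
def conjNth (n : ℕ) (l : Nat.Partition n) (i : ℕ) : ℕ :=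
  ((Finset.range n).filter (fun j => i < partNth n l j)).card

/-- Frobenius coordinate `a_i = λ_i − i + 1/2` (1-indexed; here `i : ℕ` is 0-indexed). -/
noncomputable def fA (n : ℕ) (l : Nat.Partition n) (i : ℕ) : ℝ :=
  (partNth n l i : ℝ) - i - 1/2

/-- Frobenius coordinate `b_i = λ′_i − i + 1/2` (1-indexed; here `i : ℕ` is 0-indexed). -/
noncomputable def fB (n : ℕ) (l : Nat.Partition n) (i : ℕ) : ℝ :=
  (conjNth n l i : ℝ) - i - 1/2

/-- The falling factorial `x^{k↓} = x(x−1)⋯(x−k+1)`. -/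
noncomputable def fall (x : ℝ) (k : ℕ) : ℝ := ∏ i ∈ Finset.range k, (x - i)

/-!
Since `b₁ ≤ a₁`, all Frobenius coordinates lie in `[1/2, a₁]`, and the hooks of the diagonal
cells are disjoint subsets of the Young diagram, so `∑ aᵢ + ∑ bᵢ ≤ n`. Writing
`x = a₁/n`, the normalised power sum is therefore at most `x^(k-1)`, and, since the coordinates
other than `a₁` add up to at most `1 - x`, also at most `x^k + (1 - x)^k`. With `u = r/n` we have
`x ≤ 1 - u`, and `u ≤ x` as soon as `r ≤ n/4`; then `x^k + (1 - x)^k ≤ (1 - u + u²)^k`, and both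
bounds follow from `t ≤ exp (t - 1)`.
-/

open Finset

lemma sum_range_getD_le_sum (L : List ℕ) (m : ℕ) : ∑ i ∈ range m, L.getD i 0 ≤ L.sum := by
  induction L generalizing m with
  | nil => simp
  | cons a L ih =>
    cases m with
    | zero => simp
    | succ m =>
      rw [sum_range_succ']
      simpa [add_comm] using ih m

lemma List.SortedGE.antitone_getD {L : List ℕ} (hL : L.SortedGE) : Antitone (L.getD · 0) := by
  intro i j hij
  show L.getD j 0 ≤ L.getD i 0
  by_cases hj : j < L.length
  · rw [List.getD_eq_getElem _ _ hj, List.getD_eq_getElem _ _ (hij.trans_lt hj)]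
    exact hL.getElem_ge_getElem_of_le hij
  · rw [List.getD_eq_default _ _ (not_lt.1 hj)]
    exact Nat.zero_le _

lemma card_filter_range_le_of_not {P : ℕ → Prop} [DecidablePred P]
    (hP : ∀ ⦃i j⦄, i ≤ j → P j → P i) {n r : ℕ} (hr : ¬ P r) : #{j ∈ range n | P j} ≤ r :=
  calc #{j ∈ range n | P j} ≤ #(range r) := card_le_card fun j hj => by
        simp only [mem_filter, mem_range] at hj ⊢
        by_contra h
        exact hr (hP (not_lt.1 h) hj.2)
    _ = r := card_range r

lemma of_lt_card_filter_range {P : ℕ → Prop} [DecidablePred P]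
    (hP : ∀ ⦃i j⦄, i ≤ j → P j → P i) {n r : ℕ} (hr : r < #{j ∈ range n | P j}) : P r := by
  by_contra h
  exact (card_filter_range_le_of_not hP h).not_gt hr

section Partition

variable {n : ℕ} (l : Nat.Partition n)

lemma partNth_antitone : Antitone (partNth n l) :=
  (Multiset.pairwise_sort l.parts (· ≤ ·)).sortedLE.reverse.antitone_getD

lemma sum_partNth_le (m : ℕ) : ∑ j ∈ range m, partNth n l j ≤ n := by
  have h := sum_range_getD_le_sum (l.parts.sort (· ≤ ·)).reverse m
  rwa [List.sum_reverse, ← Multiset.sum_coe, Multiset.sort_eq, l.parts_sum] at h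

lemma diagLen_le : diagLen n l ≤ n :=
  (card_filter_le _ _).trans (card_range n).le

lemma conjNth_le (i : ℕ) : conjNth n l i ≤ n :=
  (card_filter_le _ _).trans (card_range n).le

variable {l}

lemma lt_partNth_of_lt_diagLen {i : ℕ} (hi : i < diagLen n l) : i < partNth n l i :=
  of_lt_card_filter_range
    (fun _ _ hab h => (hab.trans_lt h).trans_le (partNth_antitone l hab)) hi

lemma lt_partNth_of_lt_conjNth {i r : ℕ} (hr : r < conjNth n l i) : i < partNth n l r :=
  of_lt_card_filter_range (P := fun j => i < partNth n l j)
    (fun _ _ hab h => h.trans_le (partNth_antitone l hab)) hr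

lemma lt_conjNth_of_lt_diagLen {i : ℕ} (hi : i < diagLen n l) : i < conjNth n l i :=
  calc i < #(range (i + 1)) := by simp
    _ ≤ conjNth n l i := card_le_card fun j hj => by
        have hji : j ≤ i := Nat.lt_succ_iff.1 (mem_range.1 hj)
        simp only [mem_filter, mem_range]
        exact ⟨hji.trans_lt (hi.trans_le (diagLen_le l)),
          (lt_partNth_of_lt_diagLen hi).trans_le (partNth_antitone l hji)⟩

variable (l)

lemma conjNth_antitone : Antitone (conjNth n l) := fun _ _ hij =>
  card_le_card fun _ => by
    simp only [mem_filter]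
    exact fun h => ⟨h.1, hij.trans_lt h.2⟩

def youngCells : Finset (ℕ × ℕ) :=
  (range n).biUnion fun j => {j} ×ˢ range (partNth n l j)

lemma card_youngCells_le : #(youngCells l) ≤ n :=
  card_biUnion_le.trans (by simpa using sum_partNth_le l n)

def hook (i : ℕ) : Finset (ℕ × ℕ) :=
  {i} ×ˢ Ico i (partNth n l i) ∪ Ico (i + 1) (conjNth n l i) ×ˢ {i}

lemma card_hook (i : ℕ) : #(hook l i) = (partNth n l i - i) + (conjNth n l i - (i + 1)) := by
  rw [hook, card_union_of_disjoint]
  · simp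
  · simp only [disjoint_left, mem_product, mem_singleton, mem_Ico]
    omega

lemma hook_subset_youngCells {i : ℕ} (hi : i < diagLen n l) : hook l i ⊆ youngCells l := by
  intro c hc
  simp only [hook, youngCells, mem_union, mem_product, mem_singleton, mem_Ico, mem_biUnion,
    mem_range] at hc ⊢
  refine ⟨c.1, ?_, rfl, ?_⟩
  · rcases hc with ⟨rfl, -⟩ | ⟨⟨-, h⟩, -⟩
    exacts [hi.trans_le (diagLen_le l), h.trans_le (conjNth_le l i)]
  · rcases hc with ⟨rfl, -, h⟩ | ⟨⟨-, h⟩, rfl⟩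
    exacts [h, lt_partNth_of_lt_conjNth h]

lemma pairwiseDisjoint_hook (s : Set ℕ) : s.PairwiseDisjoint (hook l) := by
  intro i _ j _ hij
  simp only [Function.onFun, hook, disjoint_left, mem_union, mem_product, mem_singleton, mem_Ico]
  omega

lemma sum_card_hook_le : ∑ i ∈ range (diagLen n l), #(hook l i) ≤ n := by
  rw [← card_biUnion (pairwiseDisjoint_hook l _)]
  have hsub := biUnion_subset.2 fun i hi => hook_subset_youngCells l (mem_range.1 hi)
  exact (card_le_card hsub).trans (card_youngCells_le l)

variable {l}

lemma half_le_fA {i : ℕ} (hi : i < diagLen n l) : 1 / 2 ≤ fA n l i := by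
  have : (i : ℝ) + 1 ≤ partNth n l i := by exact_mod_cast lt_partNth_of_lt_diagLen hi
  rw [fA]; linarith

lemma half_le_fB {i : ℕ} (hi : i < diagLen n l) : 1 / 2 ≤ fB n l i := by
  have : (i : ℝ) + 1 ≤ conjNth n l i := by exact_mod_cast lt_conjNth_of_lt_diagLen hi
  rw [fB]; linarith

variable (l)

lemma fA_le_fA_zero (i : ℕ) : fA n l i ≤ fA n l 0 := by
  have : (partNth n l i : ℝ) ≤ partNth n l 0 := by exact_mod_cast partNth_antitone l i.zero_le
  simp only [fA, CharP.cast_eq_zero]; linarith [i.cast_nonneg (α := ℝ)]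

lemma fB_le_fB_zero (i : ℕ) : fB n l i ≤ fB n l 0 := by
  have : (conjNth n l i : ℝ) ≤ conjNth n l 0 := by exact_mod_cast conjNth_antitone l i.zero_le
  simp only [fB, CharP.cast_eq_zero]; linarith [i.cast_nonneg (α := ℝ)]

lemma fA_add_fB_eq_card_hook {i : ℕ} (hi : i < diagLen n l) :
    fA n l i + fB n l i = #(hook l i) := by
  have h₁ := lt_partNth_of_lt_diagLen hi
  have h₂ := lt_conjNth_of_lt_diagLen hi
  rw [card_hook, fA, fB]
  push_cast [Nat.cast_sub h₁.le, Nat.cast_sub h₂]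
  ring

lemma sum_fA_add_sum_fB_le :
    ∑ i ∈ range (diagLen n l), fA n l i + ∑ i ∈ range (diagLen n l), fB n l i ≤ n := by
  rw [← sum_add_distrib,
    sum_congr rfl fun i hi => fA_add_fB_eq_card_hook l (mem_range.1 hi)]
  exact_mod_cast sum_card_hook_le l

end Partition

lemma sum_pow_le_pow_pred_mul_sum {ι : Type*} {s : Finset ι} {f : ι → ℝ} {c : ℝ}
    (hf : ∀ i ∈ s, 0 ≤ f i) (hc : ∀ i ∈ s, f i ≤ c) {k : ℕ} (hk : k ≠ 0) :
    ∑ i ∈ s, f i ^ k ≤ c ^ (k - 1) * ∑ i ∈ s, f i := by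
  obtain ⟨j, rfl⟩ := Nat.exists_eq_succ_of_ne_zero hk
  rw [mul_sum]
  refine sum_le_sum fun i hi => ?_
  rw [Nat.succ_sub_one, pow_succ]
  exact mul_le_mul_of_nonneg_right (pow_le_pow_left₀ (hf i hi) (hc i hi) j) (hf i hi)

lemma sum_pow_le_pow_sum {ι : Type*} {s : Finset ι} {f : ι → ℝ} (hf : ∀ i ∈ s, 0 ≤ f i)
    {k : ℕ} (hk : k ≠ 0) : ∑ i ∈ s, f i ^ k ≤ (∑ i ∈ s, f i) ^ k := by
  calc ∑ i ∈ s, f i ^ k ≤ (∑ i ∈ s, f i) ^ (k - 1) * ∑ i ∈ s, f i :=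
        sum_pow_le_pow_pred_mul_sum hf (fun i hi => single_le_sum hf hi) hk
    _ = (∑ i ∈ s, f i) ^ k := by rw [← pow_succ, Nat.sub_add_cancel (Nat.one_le_iff_ne_zero.2 hk)]

lemma pow_le_exp_mul_sub_one {t : ℝ} (ht : 0 ≤ t) (k : ℕ) : t ^ k ≤ Real.exp (k * (t - 1)) := by
  rw [Real.exp_nat_mul]
  exact pow_le_pow_left₀ ht (by linarith [Real.add_one_le_exp (t - 1)]) k

/-- The point is `x (1 - x) ≥ u (1 - u)`, so `x² + (1 - x)² ≤ 1 - 2u + 2u² ≤ (1 - u + u²)²`. -/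
lemma pow_add_one_sub_pow_le {x u : ℝ} (hux : u ≤ x) (hxu : x ≤ 1 - u) (hu : 0 ≤ u) {k : ℕ}
    (hk : 2 ≤ k) : x ^ k + (1 - x) ^ k ≤ (1 - u + u ^ 2) ^ k := by
  obtain ⟨j, rfl⟩ := Nat.exists_eq_add_of_le' hk
  set M := 1 - u + u ^ 2
  have hM : 0 ≤ M ^ j := pow_nonneg (by nlinarith) j
  have hsq : x ^ 2 + (1 - x) ^ 2 ≤ M ^ 2 := by
    nlinarith [mul_nonneg (sub_nonneg.2 hux) (sub_nonneg.2 hxu), sq_nonneg (u * (1 - u))]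
  calc x ^ (j + 2) + (1 - x) ^ (j + 2) = x ^ 2 * x ^ j + (1 - x) ^ 2 * (1 - x) ^ j := by ring
    _ ≤ x ^ 2 * M ^ j + (1 - x) ^ 2 * M ^ j := by
        gcongr <;> nlinarith
    _ = (x ^ 2 + (1 - x) ^ 2) * M ^ j := by ring
    _ ≤ M ^ 2 * M ^ j := by gcongr
    _ = M ^ (j + 2) := by ring

section FrobeniusPowerSum

variable {n : ℕ} {l : Nat.Partition n}

noncomputable def frobeniusPowerSum (n : ℕ) (l : Nat.Partition n) (k : ℕ) : ℝ :=
  (∑ i ∈ range (diagLen n l), (fA n l i / n) ^ k) + ∑ i ∈ range (diagLen n l), (fB n l i / n) ^ k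

lemma sum_div_add_sum_div_le_one :
    ∑ i ∈ range (diagLen n l), fA n l i / n + ∑ i ∈ range (diagLen n l), fB n l i / n ≤ 1 := by
  rw [← sum_div, ← sum_div, ← add_div]
  exact div_le_one_of_le₀ (sum_fA_add_sum_fB_le l) n.cast_nonneg

lemma fA_div_nonneg {i : ℕ} (hi : i < diagLen n l) : 0 ≤ fA n l i / n :=
  div_nonneg (by linarith [half_le_fA hi]) n.cast_nonneg

lemma fB_div_nonneg {i : ℕ} (hi : i < diagLen n l) : 0 ≤ fB n l i / n :=
  div_nonneg (by linarith [half_le_fB hi]) n.cast_nonneg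

lemma fA_zero_add_half_le (hm : 0 < diagLen n l) : fA n l 0 + 1 / 2 ≤ n := by
  have h0 : 0 ∈ range (diagLen n l) := mem_range.2 hm
  have hA := single_le_sum (fun i hi => (half_le_fA (mem_range.1 hi)).trans' (by norm_num)) h0
  have hB := single_le_sum (fun i hi => (half_le_fB (mem_range.1 hi)).trans' (by norm_num)) h0
  linarith [sum_fA_add_sum_fB_le l, half_le_fB hm]

lemma frobeniusPowerSum_le_pow_pred (hm : 0 < diagLen n l) (hba : fB n l 0 ≤ fA n l 0)
    {k : ℕ} (hk : k ≠ 0) : frobeniusPowerSum n l k ≤ (fA n l 0 / n) ^ (k - 1) := by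
  have hA : ∀ i ∈ range (diagLen n l), 0 ≤ fA n l i / n := fun i hi =>
    fA_div_nonneg (mem_range.1 hi)
  have hB : ∀ i ∈ range (diagLen n l), 0 ≤ fB n l i / n := fun i hi =>
    fB_div_nonneg (mem_range.1 hi)
  have hx : 0 ≤ (fA n l 0 / n) ^ (k - 1) := pow_nonneg (fA_div_nonneg hm) _
  calc frobeniusPowerSum n l k
      ≤ (fA n l 0 / n) ^ (k - 1) * ∑ i ∈ range (diagLen n l), fA n l i / n +
          (fA n l 0 / n) ^ (k - 1) * ∑ i ∈ range (diagLen n l), fB n l i / n := by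
        refine add_le_add (sum_pow_le_pow_pred_mul_sum hA (fun i _ => ?_) hk)
          (sum_pow_le_pow_pred_mul_sum hB (fun i _ => ?_) hk)
        · gcongr; exact fA_le_fA_zero l i
        · gcongr; exact (fB_le_fB_zero l i).trans hba
    _ ≤ (fA n l 0 / n) ^ (k - 1) * 1 := by
        rw [← mul_add]; exact mul_le_mul_of_nonneg_left sum_div_add_sum_div_le_one hx
    _ = (fA n l 0 / n) ^ (k - 1) := mul_one _

lemma frobeniusPowerSum_le_pow_add_one_sub_pow (hm : 0 < diagLen n l) {k : ℕ} (hk : k ≠ 0) :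
    frobeniusPowerSum n l k ≤ (fA n l 0 / n) ^ k + (1 - fA n l 0 / n) ^ k := by
  set s := range (diagLen n l)
  have h0 : 0 ∈ s := mem_range.2 hm
  have hA : ∀ i ∈ s.erase 0, 0 ≤ fA n l i / n := fun i hi =>
    fA_div_nonneg (mem_range.1 (mem_of_mem_erase hi))
  have hB : ∀ i ∈ s, 0 ≤ fB n l i / n := fun i hi => fB_div_nonneg (mem_range.1 hi)
  have hrest : ∑ i ∈ s.erase 0, fA n l i / n + ∑ i ∈ s, fB n l i / n ≤ 1 - fA n l 0 / n := by
    have := sum_div_add_sum_div_le_one (l := l)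
    rw [← add_sum_erase s _ h0] at this
    linarith
  rw [frobeniusPowerSum, ← add_sum_erase s _ h0, add_assoc]
  gcongr
  calc ∑ i ∈ s.erase 0, (fA n l i / n) ^ k + ∑ i ∈ s, (fB n l i / n) ^ k
      ≤ (∑ i ∈ s.erase 0, fA n l i / n) ^ k + (∑ i ∈ s, fB n l i / n) ^ k :=
        add_le_add (sum_pow_le_pow_sum hA hk) (sum_pow_le_pow_sum hB hk)
    _ ≤ (∑ i ∈ s.erase 0, fA n l i / n + ∑ i ∈ s, fB n l i / n) ^ k :=
        pow_add_pow_le (sum_nonneg hA) (sum_nonneg hB) hk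
    _ ≤ (1 - fA n l 0 / n) ^ k := by
        gcongr
        exact add_nonneg (sum_nonneg hA) (sum_nonneg hB)

lemma frobeniusPowerSum_le_exp_sq (hm : 0 < diagLen n l) {k : ℕ} (hk : 2 ≤ k)
    (hr : (n : ℝ) - fA n l 0 - 1 / 2 ≤ n / 4) :
    frobeniusPowerSum n l k ≤ Real.exp (-(k : ℝ) * ((n : ℝ) - fA n l 0 - 1 / 2) / n +
      (k : ℝ) * ((n : ℝ) - fA n l 0 - 1 / 2) ^ 2 / (n : ℝ) ^ 2) := by
  have hn : (1 : ℝ) ≤ n := by exact_mod_cast hm.trans_le (diagLen_le l)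
  have ha := fA_zero_add_half_le hm
  set u := ((n : ℝ) - fA n l 0 - 1 / 2) / n with hu
  have hux : u ≤ fA n l 0 / n := div_le_div_of_nonneg_right (by linarith) (by positivity)
  have hxu : fA n l 0 / n ≤ 1 - u := by
    rw [hu, one_sub_div (by positivity)]; gcongr; linarith
  calc frobeniusPowerSum n l k ≤ (fA n l 0 / n) ^ k + (1 - fA n l 0 / n) ^ k :=
        frobeniusPowerSum_le_pow_add_one_sub_pow hm (by omega)
    _ ≤ (1 - u + u ^ 2) ^ k :=
        pow_add_one_sub_pow_le hux hxu (div_nonneg (by linarith) (by positivity)) hk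
    _ ≤ Real.exp (k * (1 - u + u ^ 2 - 1)) := pow_le_exp_mul_sub_one (by nlinarith) k
    _ = _ := by rw [hu]; congr 1; field_simp; ring

lemma frobeniusPowerSum_le_exp_half (hm : 0 < diagLen n l) (hba : fB n l 0 ≤ fA n l 0) {k : ℕ}
    (hk : 2 ≤ k) : frobeniusPowerSum n l k ≤
      Real.exp (-(k : ℝ) * ((n : ℝ) - fA n l 0 - 1 / 2) / (2 * n)) := by
  have hn : (0 : ℝ) < n := by exact_mod_cast hm.trans_le (diagLen_le l)
  have ha := fA_zero_add_half_le hm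
  have hk' : (k : ℝ) / 2 ≤ ((k - 1 : ℕ) : ℝ) := by
    have : (2 : ℝ) ≤ k := by exact_mod_cast hk
    rw [Nat.cast_sub (by omega)]
    linarith
  set u := ((n : ℝ) - fA n l 0 - 1 / 2) / n with hu
  have hu0 : 0 ≤ u := div_nonneg (by linarith) hn.le
  have hxu : fA n l 0 / n - 1 ≤ -u := by
    rw [hu, div_sub_one hn.ne', ← neg_div]; gcongr; linarith
  calc frobeniusPowerSum n l k ≤ (fA n l 0 / n) ^ (k - 1) :=
        frobeniusPowerSum_le_pow_pred hm hba (by omega)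
    _ ≤ Real.exp ((k - 1 : ℕ) * (fA n l 0 / n - 1)) :=
        pow_le_exp_mul_sub_one (fA_div_nonneg hm) _
    _ ≤ Real.exp ((k - 1 : ℕ) * -u) := by gcongr
    _ ≤ Real.exp (k / 2 * -u) :=
        Real.exp_le_exp.2 (mul_le_mul_of_nonpos_right hk' (neg_nonpos.2 hu0))
    _ = _ := by rw [hu]; field_simp

end FrobeniusPowerSum

/-- **Lemma (sums of powers of Frobenius coordinates).** Let `λ ⊢ n` with Frobenius
coordinates `(a|b)`, `a₁ ≥ b₁`, `k ≥ 2`, `r = n − a₁ − 1/2`. (i) There is an absolute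
constant `c₀ > 0` such that if `r ≤ c₀·n` then
`∑ (a_i/n)^k + ∑ (b_i/n)^k ≤ exp(−k·r/n + k·r²/n²)`; (ii) for all `r ≤ n`,
`∑ (a_i/n)^k + ∑ (b_i/n)^k ≤ exp(−k·r/(2n))`. -/
theorem sum_frobenius_powers_bound :
    ∃ c₀ > (0 : ℝ), ∀ (n k : ℕ) (l : Nat.Partition n), 2 ≤ k →
      fB n l 0 ≤ fA n l 0 →
      ((((n : ℝ) - fA n l 0 - 1/2) ≤ c₀ * n →
        (∑ i ∈ Finset.range (diagLen n l), (fA n l i / n) ^ k) +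
          (∑ i ∈ Finset.range (diagLen n l), (fB n l i / n) ^ k) ≤
          Real.exp (-(k : ℝ) * ((n : ℝ) - fA n l 0 - 1/2) / n +
            (k : ℝ) * ((n : ℝ) - fA n l 0 - 1/2) ^ 2 / (n : ℝ) ^ 2)) ∧
      (((n : ℝ) - fA n l 0 - 1/2) ≤ n →
        (∑ i ∈ Finset.range (diagLen n l), (fA n l i / n) ^ k) +
          (∑ i ∈ Finset.range (diagLen n l), (fB n l i / n) ^ k) ≤
          Real.exp (-(k : ℝ) * ((n : ℝ) - fA n l 0 - 1/2) / (2 * n)))) := by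
  refine ⟨1 / 4, by norm_num, fun n k l hk hba => ?_⟩
  rcases Nat.eq_zero_or_pos (diagLen n l) with hm | hm
  · simp [hm, Real.exp_nonneg]
  · exact ⟨fun hr => frobeniusPowerSum_le_exp_sq hm hk (by linarith),
      fun _ => frobeniusPowerSum_le_exp_half hm hba hk⟩
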